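/- Let F_1, F_2 ∈ F^n have radial functions ρ_1, ρ_2 and support functions h_1, h_2 respectively. If ρ_2(x) ≤ ρ_1(x) for all x ∈ S^n, then h_2(N) ≤ h_1(N) for all N ∈ S^n; and if additionally ρ_2 is not identically equal to ρ_1, then there exists N̄ ∈ S^n with h_2(N̄) < h_1(N̄), and the set {N ∈ S^n : h_2(N) < h_1(N)} has positive σ-measure. -/

import Mathlib

/-!
For `N` on the sphere, `h(N)` is the supremum of `ρ(x)⟨x, N⟩`; terms with `⟨x, N⟩ < 0` are
negative while `h(N) > 0`, so `ρ₂ ≤ ρ₁` gives `h₂ ≤ h₁`. If `ρ₂(x₀) < ρ₁(x₀)`, the point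
`p = ρ₁(x₀) x₀` of the first body lies outside the second one, and a hyperplane separating `p`
from the second body has a unit normal `N̄` with `h₂(N̄) < ⟨p, N̄⟩ ≤ h₁(N̄)`. Support functions
are Lipschitz, so `h₂ < h₁` on an open cap around `N̄`; the orthogonal projection onto `N̄^⊥` is
`1`-Lipschitz and maps that cap onto a set containing an `n`-dimensional ball, so the cap has
positive `n`-dimensional Hausdorff measure.
-/

open MeasureTheory Set
open scoped ENNReal RealInnerProductSpace NNReal

noncomputable section

/-- Euclidean space `ℝ^{n+1}`. -/
abbrev Euc (n : ℕ) : Type := EuclideanSpace ℝ (Fin (n + 1))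

/-- The unit sphere `S^n ⊂ ℝ^{n+1}` centered at the origin. -/
def uSphere (n : ℕ) : Set (Euc n) := Metric.sphere (0 : Euc n) 1

/-- The standard `n`-dimensional (Lebesgue/Hausdorff) measure `σ` on `S^n`. -/
def sphMeasure (n : ℕ) : Measure (Euc n) :=
  (μH[n] : Measure (Euc n)).restrict (uSphere n)

/-- A closed convex hypersurface `F ∈ 𝓕ⁿ` is the boundary of a compact convex set
containing the origin in its interior; we record the bounded convex body. -/
structure ConvexBodyO (n : ℕ) where
  carrier : Set (Euc n)
  isCompact : IsCompact carrier
  convex : Convex ℝ carrier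
  zero_mem_interior : (0 : Euc n) ∈ interior carrier

/-- The radial function `ρ` of `F`: `ρ(x) x ∈ F` for `x ∈ S^n`. -/
def radialFn {n : ℕ} (B : ConvexBodyO n) (x : Euc n) : ℝ :=
  sSup {t : ℝ | 0 ≤ t ∧ t • x ∈ B.carrier}

/-- The support function `h(N) = sup_{x ∈ S^n} ρ(x)⟨x,N⟩`. -/
def supportFn {n : ℕ} (B : ConvexBodyO n) (N : Euc n) : ℝ :=
  sSup ((fun x => radialFn B x * ⟪x, N⟫) '' uSphere n)

/-- The generalized Gauss map: `α_F(x)` is the set of outward unit normals of hyperplanes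
supporting `F` at `ρ(x)x`. -/
def gaussMap {n : ℕ} (B : ConvexBodyO n) (x : Euc n) : Set (Euc n) :=
  {N ∈ uSphere n | ∀ y ∈ B.carrier, ⟪y, N⟫ ≤ ⟪radialFn B x • x, N⟫}

/-- `α_F(ω) = ⋃_{x ∈ ω} α_F(x)`. -/
def gaussImage {n : ℕ} (B : ConvexBodyO n) (ω : Set (Euc n)) : Set (Euc n) :=
  ⋃ x ∈ ω, gaussMap B x

/-- A subset `ω ⊆ S^n` is spherically convex if the cone over `ω` with vertex at `O`
is convex. -/
def SphericallyConvex (n : ℕ) (ω : Set (Euc n)) : Prop :=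
  ω ⊆ uSphere n ∧ Convex ℝ {y : Euc n | ∃ t : ℝ, 0 ≤ t ∧ ∃ x ∈ ω, y = t • x}

/-- The dual set `ω* = {y ∈ S^n : ⟨x,y⟩ ≤ 0 ∀ x ∈ ω}`. -/
def dualSet (n : ℕ) (ω : Set (Euc n)) : Set (Euc n) :=
  {y ∈ uSphere n | ∀ x ∈ ω, ⟪x, y⟫ ≤ 0}

open Metric Module

section Sphere

variable {E : Type*} [NormedAddCommGroup E] [InnerProductSpace ℝ E]

lemma exists_norm_smul_add_eq_one_of_inner_eq_zero {N w : E} (hN : ‖N‖ = 1)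
    (hNw : ⟪N, w⟫ = 0) (hw : ‖w‖ ≤ 1) :
    ∃ c : ℝ, ‖c • N + w‖ = 1 ∧ ‖c • N + w - N‖ ≤ 2 * ‖w‖ := by
  have hsq : ∀ c : ℝ, ‖c • N + w‖ ^ 2 = c ^ 2 + ‖w‖ ^ 2 := fun c => by
    rw [norm_add_sq_real, real_inner_smul_left, hNw, norm_smul, Real.norm_eq_abs, hN]
    ring_nf; rw [sq_abs]
  set c := √(1 - ‖w‖ ^ 2)
  have hc2 : c ^ 2 = 1 - ‖w‖ ^ 2 := Real.sq_sqrt (by nlinarith [norm_nonneg w])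
  have hc0 : 0 ≤ c := Real.sqrt_nonneg _
  have hc1 : c ≤ 1 := Real.sqrt_le_one.mpr (by nlinarith [norm_nonneg w])
  refine ⟨c, ?_, ?_⟩
  · rw [← sq_eq_sq₀ (norm_nonneg _) zero_le_one, hsq, hc2]; ring
  · have hdiff : c • N + w - N = (c - 1) • N + w := by module
    -- `(1 - c)² ≤ (1 - c)(1 + c) = ‖w‖²`
    rw [hdiff, ← sq_le_sq₀ (norm_nonneg _) (by positivity), hsq]
    nlinarith [norm_nonneg w]

variable [FiniteDimensional ℝ E] [MeasurableSpace E] [BorelSpace E]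

theorem hausdorffMeasure_sphere_inter_pos {d : ℕ} (hd : finrank ℝ E = d + 1) {U : Set E}
    (hU : IsOpen U) {N : E} (hN : N ∈ sphere (0 : E) 1) (hNU : N ∈ U) :
    0 < μH[d] (sphere (0 : E) 1 ∩ U) := by
  have hN1 : ‖N‖ = 1 := mem_sphere_zero_iff_norm.mp hN
  obtain ⟨ε, hε, hball⟩ := isOpen_iff.mp hU N hNU
  set W := (ℝ ∙ N)ᗮ
  have hW : finrank ℝ W = d := by
    have : Fact (finrank ℝ E = d + 1) := ⟨hd⟩
    exact Submodule.finrank_orthogonal_span_singleton (by rintro rfl; simp at hN1)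
  set r := min (ε / 2) 1
  have hr : 0 < r := lt_min (half_pos hε) one_pos
  have hcover : ball (0 : W) r ⊆ W.orthogonalProjectionOnto '' (sphere (0 : E) 1 ∩ U) := by
    intro w hw
    have hwr : ‖(w : E)‖ < r := by simpa using hw
    obtain ⟨c, hc1, hcN⟩ := exists_norm_smul_add_eq_one_of_inner_eq_zero hN1
      (Submodule.mem_orthogonal_singleton_iff_inner_right.mp w.2) (hwr.le.trans (min_le_right _ _))
    refine ⟨c • N + w, ⟨mem_sphere_zero_iff_norm.mpr hc1, hball ?_⟩, ?_⟩
    · rw [mem_ball, dist_eq_norm]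
      linarith [min_le_left (ε / 2) 1]
    · rw [map_add, map_smul,
        Submodule.orthogonalProjectionOnto_orthogonalComplement_singleton_eq_zero,
        Submodule.orthogonalProjectionOnto_mem_subspace_eq_self, smul_zero, zero_add]
  calc 0 < μH[d] (ball (0 : W) r) := by rw [← hW]; exact measure_ball_pos _ _ hr
    _ ≤ μH[d] (W.orthogonalProjectionOnto '' (sphere (0 : E) 1 ∩ U)) := measure_mono hcover
    _ ≤ μH[d] (sphere (0 : E) 1 ∩ U) :=
      hausdorffMeasure_orthogonalProjectionOnto_le _ _ _ (Nat.cast_nonneg d)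

end Sphere

lemma mem_uSphere_iff {n : ℕ} {x : Euc n} : x ∈ uSphere n ↔ ‖x‖ = 1 :=
  mem_sphere_zero_iff_norm

namespace ConvexBodyO

variable {n : ℕ} (B : ConvexBodyO n)

lemma zero_mem : (0 : Euc n) ∈ B.carrier :=
  interior_subset B.zero_mem_interior

lemma exists_forall_norm_le : ∃ R, ∀ y ∈ B.carrier, ‖y‖ ≤ R := by
  obtain ⟨R, hR⟩ := B.isCompact.isBounded.subset_closedBall 0
  exact ⟨R, fun y hy => by simpa using hR hy⟩

lemma bddAbove_radialSet {x : Euc n} (hx : x ∈ uSphere n) :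
    BddAbove {t : ℝ | 0 ≤ t ∧ t • x ∈ B.carrier} := by
  obtain ⟨R, hR⟩ := B.exists_forall_norm_le
  refine ⟨R, fun t ⟨ht, htx⟩ => ?_⟩
  simpa [norm_smul, abs_of_nonneg ht, mem_uSphere_iff.mp hx] using hR _ htx

lemma le_radialFn {x : Euc n} (hx : x ∈ uSphere n) {t : ℝ} (ht : 0 ≤ t)
    (htx : t • x ∈ B.carrier) : t ≤ radialFn B x :=
  le_csSup (B.bddAbove_radialSet hx) ⟨ht, htx⟩

lemma radialFn_pos {x : Euc n} (hx : x ∈ uSphere n) : 0 < radialFn B x := by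
  obtain ⟨δ, hδ, hball⟩ := Metric.mem_nhds_iff.mp (mem_interior_iff_mem_nhds.mp B.zero_mem_interior)
  have hmem : (δ / 2) • x ∈ B.carrier := hball (by
    simp [norm_smul, mem_uSphere_iff.mp hx, abs_of_pos hδ, hδ])
  exact (half_pos hδ).trans_le (B.le_radialFn hx (half_pos hδ).le hmem)

lemma radialFn_smul_mem {x : Euc n} (hx : x ∈ uSphere n) : radialFn B x • x ∈ B.carrier := by
  have hclosed : IsClosed {t : ℝ | 0 ≤ t ∧ t • x ∈ B.carrier} :=
    isClosed_Ici.inter (B.isCompact.isClosed.preimage (continuous_id.smul continuous_const))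
  exact (hclosed.csSup_mem ⟨0, le_rfl, by simpa using B.zero_mem⟩ (B.bddAbove_radialSet hx)).2

lemma bddAbove_supportSet (N : Euc n) :
    BddAbove ((fun x => radialFn B x * ⟪x, N⟫) '' uSphere n) := by
  obtain ⟨R, hR⟩ := B.exists_forall_norm_le
  refine ⟨R * ‖N‖, ?_⟩
  rintro - ⟨x, hx, rfl⟩
  calc radialFn B x * ⟪x, N⟫ = ⟪radialFn B x • x, N⟫ := (real_inner_smul_left _ _ _).symm
    _ ≤ ‖radialFn B x • x‖ * ‖N‖ := real_inner_le_norm _ _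
    _ ≤ R * ‖N‖ := mul_le_mul_of_nonneg_right (hR _ (B.radialFn_smul_mem hx)) (norm_nonneg N)

lemma le_supportFn (N : Euc n) {x : Euc n} (hx : x ∈ uSphere n) :
    radialFn B x * ⟪x, N⟫ ≤ supportFn B N :=
  le_csSup (B.bddAbove_supportSet N) ⟨x, hx, rfl⟩

lemma supportFn_le_of_forall_inner_le {N : Euc n} {c : ℝ}
    (h : ∀ y ∈ B.carrier, ⟪y, N⟫ ≤ c) : supportFn B N ≤ c := by
  refine csSup_le ((NormedSpace.sphere_nonempty.mpr zero_le_one).image _) ?_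
  rintro - ⟨x, hx, rfl⟩
  simpa only [real_inner_smul_left] using h _ (B.radialFn_smul_mem hx)

lemma supportFn_pos {N : Euc n} (hN : N ∈ uSphere n) : 0 < supportFn B N := by
  have h := B.le_supportFn N hN
  rw [real_inner_self_eq_norm_sq, mem_uSphere_iff.mp hN, one_pow, mul_one] at h
  exact (B.radialFn_pos hN).trans_le h

lemma continuous_supportFn : Continuous (supportFn B) := by
  obtain ⟨R, hR⟩ := B.exists_forall_norm_le
  refine (LipschitzWith.of_le_add_mul' R fun N M => ?_).continuous
  refine csSup_le ((NormedSpace.sphere_nonempty.mpr zero_le_one).image _) ?_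
  rintro - ⟨x, hx, rfl⟩
  have hp := hR _ (B.radialFn_smul_mem hx)
  calc radialFn B x * ⟪x, N⟫ = radialFn B x * ⟪x, M⟫ + ⟪radialFn B x • x, N - M⟫ := by
        rw [real_inner_smul_left, inner_sub_right]; ring
    _ ≤ supportFn B M + ‖radialFn B x • x‖ * ‖N - M‖ :=
        add_le_add (B.le_supportFn M hx) (real_inner_le_norm _ _)
    _ ≤ supportFn B M + R * dist N M := by
        rw [dist_eq_norm]; gcongr

lemma exists_supportFn_lt_inner_of_notMem {p : Euc n} (hp : p ∉ B.carrier) :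
    ∃ N ∈ uSphere n, supportFn B N < ⟪p, N⟫ := by
  obtain ⟨f, c, hfB, hfp⟩ := geometric_hahn_banach_closed_point B.convex B.isCompact.isClosed hp
  set v := (InnerProductSpace.toDual ℝ (Euc n)).symm f
  have hv : ∀ y, ⟪y, v⟫ = f y := fun y => by
    rw [real_inner_comm]; exact InnerProductSpace.toDual_symm_apply
  have hv0 : v ≠ 0 := fun h0 => by
    have h1 := hfB 0 B.zero_mem
    have h2 := hv p
    simp only [h0, inner_zero_right, map_zero] at h1 h2
    linarith
  have hvpos : 0 < ‖v‖ := norm_pos_iff.mpr hv0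
  refine ⟨‖v‖⁻¹ • v, mem_uSphere_iff.mpr (norm_smul_inv_norm hv0), ?_⟩
  have hinner : ∀ y, ⟪y, ‖v‖⁻¹ • v⟫ = ‖v‖⁻¹ * f y := fun y => by
    rw [real_inner_smul_right, hv]
  calc supportFn B (‖v‖⁻¹ • v) ≤ ‖v‖⁻¹ * c := B.supportFn_le_of_forall_inner_le fun y hy => by
        rw [hinner]; exact mul_le_mul_of_nonneg_left (hfB y hy).le (inv_nonneg.mpr hvpos.le)
    _ < ⟪p, ‖v‖⁻¹ • v⟫ := by rw [hinner]; exact mul_lt_mul_of_pos_left hfp (inv_pos.mpr hvpos)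

end ConvexBodyO

section Comparison

variable {n : ℕ} {B₁ B₂ : ConvexBodyO n}

theorem supportFn_le_supportFn_of_radialFn_le
    (hle : ∀ x ∈ uSphere n, radialFn B₂ x ≤ radialFn B₁ x) {N : Euc n} (hN : N ∈ uSphere n) :
    supportFn B₂ N ≤ supportFn B₁ N := by
  refine csSup_le ((NormedSpace.sphere_nonempty.mpr zero_le_one).image _) ?_
  rintro - ⟨x, hx, rfl⟩
  rcases le_or_gt 0 ⟪x, N⟫ with hxN | hxN
  · exact (mul_le_mul_of_nonneg_right (hle x hx) hxN).trans (B₁.le_supportFn N hx)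
  · exact (mul_nonpos_of_nonneg_of_nonpos (B₂.radialFn_pos hx).le hxN.le).trans
      (B₁.supportFn_pos hN).le

theorem exists_supportFn_lt_supportFn_of_radialFn_lt {x₀ : Euc n} (hx₀ : x₀ ∈ uSphere n)
    (hlt : radialFn B₂ x₀ < radialFn B₁ x₀) :
    ∃ N ∈ uSphere n, supportFn B₂ N < supportFn B₁ N := by
  have hp : radialFn B₁ x₀ • x₀ ∉ B₂.carrier := fun hp =>
    hlt.not_ge (B₂.le_radialFn hx₀ (B₁.radialFn_pos hx₀).le hp)
  obtain ⟨N, hN, hNp⟩ := B₂.exists_supportFn_lt_inner_of_notMem hp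
  refine ⟨N, hN, hNp.trans_le ?_⟩
  simpa only [real_inner_smul_left] using B₁.le_supportFn N hx₀

end Comparison

theorem statement16_general (n : ℕ) (B₁ B₂ : ConvexBodyO n)
    (hle : ∀ x ∈ uSphere n, radialFn B₂ x ≤ radialFn B₁ x) :
    (∀ N ∈ uSphere n, supportFn B₂ N ≤ supportFn B₁ N) ∧
    ((¬ ∀ x ∈ uSphere n, radialFn B₂ x = radialFn B₁ x) →
      (∃ N ∈ uSphere n, supportFn B₂ N < supportFn B₁ N) ∧
      0 < sphMeasure n {N ∈ uSphere n | supportFn B₂ N < supportFn B₁ N}) := by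
  refine ⟨fun N hN => supportFn_le_supportFn_of_radialFn_le hle hN, fun hne => ?_⟩
  obtain ⟨x₀, hx₀, hne⟩ : ∃ x ∈ uSphere n, radialFn B₂ x ≠ radialFn B₁ x := by
    simpa using hne
  obtain ⟨N, hN, hlt⟩ :=
    exists_supportFn_lt_supportFn_of_radialFn_lt hx₀ ((hle x₀ hx₀).lt_of_ne hne)
  refine ⟨⟨N, hN, hlt⟩, ?_⟩
  have hU : IsOpen {N | supportFn B₂ N < supportFn B₁ N} :=
    isOpen_lt B₂.continuous_supportFn B₁.continuous_supportFn
  calc 0 < μH[n] (uSphere n ∩ {N | supportFn B₂ N < supportFn B₁ N}) :=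
        hausdorffMeasure_sphere_inter_pos finrank_euclideanSpace_fin hU hN hlt
    _ ≤ μH[n] ({N ∈ uSphere n | supportFn B₂ N < supportFn B₁ N} ∩ uSphere n) :=
        measure_mono fun N hN => ⟨hN, hN.1⟩
    _ ≤ sphMeasure n {N ∈ uSphere n | supportFn B₂ N < supportFn B₁ N} :=
        Measure.le_restrict_apply _ _

/-- Monotonicity of support functions under pointwise comparison of radial functions:
`ρ₂ ≤ ρ₁` on `S^n` implies `h₂ ≤ h₁` on `S^n`; and if moreover `ρ₂ ≢ ρ₁`, then `h₂ < h₁`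
at some `N̄ ∈ S^n`, and `{N ∈ S^n : h₂(N) < h₁(N)}` has positive `σ`-measure. -/
theorem statement16 (n : ℕ) (hn : 1 ≤ n) (B₁ B₂ : ConvexBodyO n)
    (hle : ∀ x ∈ uSphere n, radialFn B₂ x ≤ radialFn B₁ x) :
    (∀ N ∈ uSphere n, supportFn B₂ N ≤ supportFn B₁ N) ∧
    ((¬ ∀ x ∈ uSphere n, radialFn B₂ x = radialFn B₁ x) →
      (∃ N ∈ uSphere n, supportFn B₂ N < supportFn B₁ N) ∧
      0 < sphMeasure n {N ∈ uSphere n | supportFn B₂ N < supportFn B₁ N}) :=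
  statement16_general n B₁ B₂ hle
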